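/- Duality of positivity cones: the cone WP^p of positive (p,p)-forms on V is the dual cone of the cone SP^q of strongly positive (q,q)-forms (q = n − p), i.e., u ∈ Λ_ℝ^{p,p}V^∨ is positive if and only if u ∧ v is a positive volume form for every strongly positive v ∈ Λ_ℝ^{q,q}V^∨. -/

import Mathlib

open Complex BigOperators

noncomputable section

/-- The space of ℂ-valued real-alternating `k`-forms on a complex vector space `V`.
(`(p,q)`-forms with `p + q = k` form distinguished subspaces of this space.) -/
abbrev AltForm (V : Type*) [AddCommGroup V] [Module ℂ V] (k : ℕ) : Type _ :=
  AlternatingMap ℝ V ℂ (Fin k)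

namespace AltForm

variable {V : Type*} [AddCommGroup V] [Module ℂ V]

/-- The wedge product of two forms. -/
def wedge {p q : ℕ} (u : AltForm V p) (v : AltForm V q) : AltForm V (p + q) :=
  ((TensorProduct.lift (LinearMap.mul ℝ ℂ)).compAlternatingMap
    (u.domCoprod v)).domDomCongr finSumFinEquiv

/-- The conjugate of a form. -/
def conj {k : ℕ} (u : AltForm V k) : AltForm V k :=
  Complex.conjAe.toLinearMap.compAlternatingMap u

/-- Reindexing a form along an equality of degrees. -/
def castForm {k l : ℕ} (h : k = l) (u : AltForm V k) : AltForm V l :=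
  u.domDomCongr (finCongr h)

/-- Restriction of scalars of a ℂ-alternating map to an ℝ-alternating map. -/
def ofComplexAlt {p : ℕ} (u : AlternatingMap ℂ V ℂ (Fin p)) : AltForm V p :=
  { toMultilinearMap := u.toMultilinearMap.restrictScalars ℝ,
    map_eq_zero_of_eq' := u.map_eq_zero_of_eq' }

/-- The wedge product `f 0 ∧ f 1 ∧ ⋯ ∧ f (p-1)` of a family of ℂ-linear forms,
given by the determinant formula. -/
def wedgeFamily {p : ℕ} (f : Fin p → (V →ₗ[ℂ] ℂ)) : AltForm V p :=
  ofComplexAlt (Matrix.detRowAlternating.compLinearMap (LinearMap.pi f))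

/-- A `(p,0)`-form is decomposable if it is a wedge product of `p` elements of `Λ^{1,0}V^∨`,
i.e. of ℂ-linear functionals. -/
def IsDecomposable {p : ℕ} (β : AltForm V p) : Prop :=
  ∃ f : Fin p → (V →ₗ[ℂ] ℂ), β = wedgeFamily f

/-- `u` is of type `(p,q)`: pulling back by scalar multiplication by `c` acts by
`c ^ p * c̄ ^ q`.  Among real-alternating `(p+q)`-forms this characterizes the forms in
`Λ^{p,q} V^∨`. -/
def IsTypeForm (p q : ℕ) (u : AltForm V (p + q)) : Prop :=
  ∀ (c : ℂ) (v : Fin (p + q) → V),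
    u (fun i => c • v i) = c ^ p * (starRingEnd ℂ) c ^ q * u v

/-- The standard positive volume form
`i^{n²} (e₁^∨∧⋯∧eₙ^∨) ∧ (ē₁^∨∧⋯∧ēₙ^∨) = i e₁^∨∧ē₁^∨ ∧ ⋯ ∧ i eₙ^∨∧ēₙ^∨`
associated with a basis. -/
def stdVol {n : ℕ} (b : Module.Basis (Fin n) ℂ V) : AltForm V (n + n) :=
  (Complex.I ^ (n ^ 2)) •
    wedge (wedgeFamily fun i => b.coord i) (conj (wedgeFamily fun i => b.coord i))

/-- A `(n,n)`-form is a positive volume form if it is a nonnegative real multiple of the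
standard volume form of a basis. -/
def IsPosVolume {n : ℕ} (b : Module.Basis (Fin n) ℂ V) (ν : AltForm V (n + n)) : Prop :=
  ∃ τ : ℝ, 0 ≤ τ ∧ ν = τ • stdVol b

/-- A complex number is a nonnegative real. -/
def IsNonnegReal (z : ℂ) : Prop := 0 ≤ z.re ∧ z.im = 0

/-- `u` is real, i.e. `ū = u`. -/
def IsRealForm {k : ℕ} (u : AltForm V k) : Prop := conj u = u

/-- Auxiliary vector list for the mixed evaluation `u(w₁,…,w_p,w̄₁,…,w̄_p)`. -/
def mixedVec {p : ℕ} (w : Fin p → V) (j : Fin (p + p)) : V :=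
  if h : (j : ℕ) < p then w ⟨j, h⟩ else w ⟨(j : ℕ) - p, by have := j.isLt; omega⟩

/-- Auxiliary coefficients for the mixed evaluation. -/
def mixedCoeff (p : ℕ) (j : Fin (p + p)) : Bool → ℂ
  | true => if (j : ℕ) < p then -Complex.I else Complex.I
  | false => 1

/-- The evaluation `u(w₁,…,w_p,w̄₁,…,w̄_p)` of a `(p+p)`-form `u` on the `(1,0)`-parts of
`w₁,…,w_p` followed by the `(0,1)`-parts of `w₁,…,w_p`, expressed through the real
multilinear expansion `w^{1,0} = (w - i·(i•w))/2`, `w^{0,1} = (w + i·(i•w))/2`. -/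
def mixedEval {p : ℕ} (u : AltForm V (p + p)) (w : Fin p → V) : ℂ :=
  (4 ^ p : ℂ)⁻¹ * ∑ S : Fin (p + p) → Bool,
    (∏ j : Fin (p + p), mixedCoeff p j (S j)) *
      u (fun j => if S j then Complex.I • mixedVec w j else mixedVec w j)

/-- `u` is a positive `(p,p)`-form: tested against decomposable `(q,0)`-forms `β`
(`q = n - p`), the form `u ∧ i^{q²} β ∧ β̄` is a positive volume form. -/
def IsPosForm {n p : ℕ} (b : Module.Basis (Fin n) ℂ V) (hp : p ≤ n) (u : AltForm V (p + p)) : Prop :=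
  ∀ β : AltForm V (n - p), IsDecomposable β →
    IsPosVolume b (castForm (by omega)
      (wedge u ((Complex.I ^ ((n - p) ^ 2)) • wedge β (conj β))))

/-- `u` is a Hermitian positive `(p,p)`-form: tested against arbitrary `(q,0)`-forms `β`
(`q = n - p`), the form `u ∧ i^{q²} β ∧ β̄` is a positive volume form. -/
def IsHermPosForm {n p : ℕ} (b : Module.Basis (Fin n) ℂ V) (hp : p ≤ n) (u : AltForm V (p + p)) : Prop :=
  ∀ β : AltForm V (n - p), IsTypeForm (n - p) 0 β →
    IsPosVolume b (castForm (by omega)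
      (wedge u ((Complex.I ^ ((n - p) ^ 2)) • wedge β (conj β))))

/-- `u` is a strongly positive `(p,p)`-form: a finite sum `∑ i^{p²} α_s ∧ ᾱ_s` with each
`α_s` a decomposable `(p,0)`-form. -/
def IsStronglyPos {p : ℕ} (u : AltForm V (p + p)) : Prop :=
  ∃ (N : ℕ) (α : Fin N → AltForm V p), (∀ s, IsDecomposable (α s)) ∧
    u = ∑ s, (Complex.I ^ (p ^ 2)) • wedge (α s) (conj (α s))

/-- The Hermitian form `τ ↦ (-i)·θ(τ, τ̄)` associated with a `(1,1)`-form `θ`; in terms of the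
underlying real alternating form it is `τ ↦ θ(τ, i•τ)/2`. -/
def HForm (θ : AltForm V 2) (τ : V) : ℂ :=
  -Complex.I * ((Complex.I / 2) * θ ![τ, Complex.I • τ])

/-- Griffiths semipositivity of a matrix `Θ` of `(1,1)`-forms:
`∑ v_α v̄_β (-i)Θ_{αβ}(τ,τ̄) ≥ 0` for all `v ∈ ℂ^r` and `τ ∈ V`. -/
def GriffithsSemipos {r : ℕ} (Θ : Fin r → Fin r → AltForm V 2) : Prop :=
  ∀ (v : Fin r → ℂ) (τ : V),
    IsNonnegReal (∑ α, ∑ β, v α * (starRingEnd ℂ) (v β) * HForm (Θ α β) τ)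

/-- The list of arguments `e₁, i•e₁, …, eₙ, i•eₙ` built from a basis. -/
def stdArgs {n : ℕ} (b : Module.Basis (Fin n) ℂ V) : Fin (n + n) → V :=
  fun j =>
    if (j : ℕ) % 2 = 0 then b ⟨(j : ℕ) / 2, by have := j.isLt; omega⟩
    else Complex.I • b ⟨(j : ℕ) / 2, by have := j.isLt; omega⟩

end AltForm

/-!
Both cones are built from the same elementary forms `i^{q²} β ∧ β̄` with `β` decomposable:
positivity of `u` means that `u ∧ -` sends each of them to a positive volume form, and a
strongly positive form is a finite sum of them. Since `u ∧ -` is additive and positive volume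
forms are closed under sums, the two conditions agree.
-/

namespace AltForm

variable {V : Type*} [AddCommGroup V] [Module ℂ V]

theorem wedge_add_right {p q : ℕ} (u : AltForm V p) (v w : AltForm V q) :
    wedge u (v + w) = wedge u v + wedge u w := by
  have h : u.domCoprod (v + w) = u.domCoprod v + u.domCoprod w := by
    simp only [← AlternatingMap.domCoprod'_apply, TensorProduct.tmul_add, map_add]
  rw [wedge, h, LinearMap.compAlternatingMap_add, AlternatingMap.domDomCongr_add]
  rfl

def wedgeAddHom {p q : ℕ} (u : AltForm V p) : AltForm V q →+ AltForm V (p + q) :=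
  AddMonoidHom.mk' (wedge u) (wedge_add_right u)

theorem wedge_sum_right {p q : ℕ} (u : AltForm V p) {ι : Type*} (s : Finset ι)
    (v : ι → AltForm V q) :
    wedge u (∑ i ∈ s, v i) = ∑ i ∈ s, wedge u (v i) :=
  map_sum (wedgeAddHom u) v s

theorem castForm_sum {k l : ℕ} (h : k = l) {ι : Type*} (s : Finset ι)
    (v : ι → AltForm V k) :
    castForm h (∑ i ∈ s, v i) = ∑ i ∈ s, castForm h (v i) :=
  map_sum (AlternatingMap.domDomCongrEquiv (finCongr h) : AltForm V k ≃+ AltForm V l) v s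

theorem IsPosVolume.zero {n : ℕ} (b : Module.Basis (Fin n) ℂ V) : IsPosVolume b 0 :=
  ⟨0, le_rfl, (zero_smul ℝ _).symm⟩

theorem IsPosVolume.add {n : ℕ} {b : Module.Basis (Fin n) ℂ V} {ν μ : AltForm V (n + n)}
    (hν : IsPosVolume b ν) (hμ : IsPosVolume b μ) : IsPosVolume b (ν + μ) := by
  obtain ⟨τ, hτ, rfl⟩ := hν
  obtain ⟨σ, hσ, rfl⟩ := hμ
  exact ⟨τ + σ, add_nonneg hτ hσ, (add_smul τ σ _).symm⟩

theorem IsPosVolume.sum {n : ℕ} {b : Module.Basis (Fin n) ℂ V} {ι : Type*} {s : Finset ι}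
    {ν : ι → AltForm V (n + n)} (h : ∀ i ∈ s, IsPosVolume b (ν i)) :
    IsPosVolume b (∑ i ∈ s, ν i) :=
  Finset.sum_induction ν (IsPosVolume b) (fun _ _ => IsPosVolume.add) (IsPosVolume.zero b) h

theorem IsDecomposable.isStronglyPos {p : ℕ} {α : AltForm V p} (hα : IsDecomposable α) :
    IsStronglyPos ((Complex.I ^ (p ^ 2)) • wedge α (conj α)) :=
  ⟨1, fun _ => α, fun _ => hα, by rw [Fin.sum_univ_one]⟩

end AltForm

open AltForm in
/-- duality of cones. A real (p,p)-form u is positive iff `u ∧ v` is a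
positive volume form for every strongly positive (q,q)-form v, q = n - p. -/
theorem positive_iff_dual_to_strongly_positive
    {V : Type*} [AddCommGroup V] [Module ℂ V] {n p : ℕ} (hp : p ≤ n)
    (b : Module.Basis (Fin n) ℂ V) (u : AltForm V (p + p)) :
    IsPosForm b hp u ↔
      ∀ v : AltForm V ((n - p) + (n - p)), IsStronglyPos v →
        IsPosVolume b (castForm (by omega) (wedge u v)) := by
  constructor
  · rintro hu v ⟨N, α, hα, rfl⟩
    rw [wedge_sum_right, castForm_sum]
    exact IsPosVolume.sum fun s _ => hu (α s) (hα s)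
  · exact fun h β hβ => h _ hβ.isStronglyPos
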